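/- Correspondence between the global and local encodings: for all roles r, s and every global type G of the canonical multiparty session type theory, if r ≠ s and the projection G↾r exists, then the projection of the encoded global type equals the encoded local type of the projection: (⟨G⟩_s)↾r = ⟨G↾r⟩_r^s. -/

import Mathlib

set_option autoImplicit true

/-! Roles, type variables, message labels -/
abbrev Role := ℕ
abbrev TVar := ℕ
abbrev Lbl := ℕ

/-! RouST global types -/
inductive GType : Type where
  | gend : GType
  | gvar (t : TVar) : GType
  | mu (t : TVar) (G : GType) : GType
  | comm (p q : Role) (bs : List (Lbl × GType)) : GType
  | route (p q s : Role) (bs : List (Lbl × GType)) : GType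
  | trans (p q : Role) (j : Lbl) (bs : List (Lbl × GType)) : GType
  | transRoute (p q s : Role) (j : Lbl) (bs : List (Lbl × GType)) : GType


/-! RouST local types -/
inductive LType : Type where
  | lend : LType
  | lvar (t : TVar) : LType
  | mu (t : TVar) (T : LType) : LType
  | sel (q : Role) (bs : List (Lbl × LType)) : LType
  | bra (q : Role) (bs : List (Lbl × LType)) : LType
  | selVia (q s : Role) (bs : List (Lbl × LType)) : LType
  | braVia (p s : Role) (bs : List (Lbl × LType)) : LType
  | router (p q : Role) (bs : List (Lbl × LType)) : LType
  | routerTrans (p q : Role) (j : Lbl) (bs : List (Lbl × LType)) : LType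


/-! Substitution -/
mutual
def substG (t : TVar) (R : GType) : GType → GType
  | .gend => .gend
  | .gvar u => if u = t then R else .gvar u
  | .mu u G => if u = t then .mu u G else .mu u (substG t R G)
  | .comm p q bs => .comm p q (substGBs t R bs)
  | .route p q s bs => .route p q s (substGBs t R bs)
  | .trans p q j bs => .trans p q j (substGBs t R bs)
  | .transRoute p q s j bs => .transRoute p q s j (substGBs t R bs)

def substGBs (t : TVar) (R : GType) : List (Lbl × GType) → List (Lbl × GType)
  | [] => []
  | (l, G) :: bs => (l, substG t R G) :: substGBs t R bs
end

mutual
def substL (t : TVar) (R : LType) : LType → LType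
  | .lend => .lend
  | .lvar u => if u = t then R else .lvar u
  | .mu u T => if u = t then .mu u T else .mu u (substL t R T)
  | .sel q bs => .sel q (substLBs t R bs)
  | .bra q bs => .bra q (substLBs t R bs)
  | .selVia q s bs => .selVia q s (substLBs t R bs)
  | .braVia p s bs => .braVia p s (substLBs t R bs)
  | .router p q bs => .router p q (substLBs t R bs)
  | .routerTrans p q j bs => .routerTrans p q j (substLBs t R bs)

def substLBs (t : TVar) (R : LType) : List (Lbl × LType) → List (Lbl × LType)
  | [] => []
  | (l, T) :: bs => (l, substL t R T) :: substLBs t R bs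
end
/-! Participants -/
inductive IsPt : Role → GType → Prop where
  | mu : IsPt r G → IsPt r (.mu t G)
  | comm_p : IsPt p (.comm p q bs)
  | comm_q : IsPt q (.comm p q bs)
  | comm_cont : (l, G') ∈ bs → IsPt r G' → IsPt r (.comm p q bs)
  | route_p : IsPt p (.route p q s bs)
  | route_q : IsPt q (.route p q s bs)
  | route_s : IsPt s (.route p q s bs)
  | route_cont : (l, G') ∈ bs → IsPt r G' → IsPt r (.route p q s bs)
  | trans_p : IsPt p (.trans p q j bs)
  | trans_q : IsPt q (.trans p q j bs)
  | trans_cont : (l, G') ∈ bs → IsPt r G' → IsPt r (.trans p q j bs)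
  | transRoute_p : IsPt p (.transRoute p q s j bs)
  | transRoute_q : IsPt q (.transRoute p q s j bs)
  | transRoute_s : IsPt s (.transRoute p q s j bs)
  | transRoute_cont : (l, G') ∈ bs → IsPt r G' → IsPt r (.transRoute p q s j bs)

/-! Free type variables -/
inductive GFree : TVar → GType → Prop where
  | gvar : GFree t (.gvar t)
  | mu : t ≠ u → GFree t G → GFree t (.mu u G)
  | comm : (l, G') ∈ bs → GFree t G' → GFree t (.comm p q bs)
  | route : (l, G') ∈ bs → GFree t G' → GFree t (.route p q s bs)
  | trans : (l, G') ∈ bs → GFree t G' → GFree t (.trans p q j bs)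
  | transRoute : (l, G') ∈ bs → GFree t G' → GFree t (.transRoute p q s j bs)

/-- A global type is closed when every type variable is bound. -/
def GClosed (G : GType) : Prop := ∀ t, ¬ GFree t G

/-- `Unguarded t G` : `G` is the variable `t` up to a chain of `μ`-binders
(so `μt.G` would not be contractive). -/
def Unguarded (t : TVar) : GType → Prop
  | .gvar u => u = t
  | .mu u G => u ≠ t ∧ Unguarded t G
  | _ => False

/-- Syntactic constraints of the RouST grammar: recursion is contractive
(guarded), branch sets are nonempty with pairwise-distinct labels, and the
roles of each communication are pairwise distinct. -/
inductive GValid : GType → Prop where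
  | gend : GValid .gend
  | gvar : GValid (.gvar t)
  | mu : ¬ Unguarded t G → GValid G → GValid (.mu t G)
  | comm : p ≠ q → bs ≠ [] → (bs.map Prod.fst).Nodup →
      (∀ b ∈ bs, GValid b.2) → GValid (.comm p q bs)
  | route : p ≠ q → p ≠ s → q ≠ s → bs ≠ [] → (bs.map Prod.fst).Nodup →
      (∀ b ∈ bs, GValid b.2) → GValid (.route p q s bs)
  | trans : p ≠ q → bs ≠ [] → (bs.map Prod.fst).Nodup → j ∈ bs.map Prod.fst →
      (∀ b ∈ bs, GValid b.2) → GValid (.trans p q j bs)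
  | transRoute : p ≠ q → p ≠ s → q ≠ s → bs ≠ [] → (bs.map Prod.fst).Nodup →
      j ∈ bs.map Prod.fst →
      (∀ b ∈ bs, GValid b.2) → GValid (.transRoute p q s j bs)

/-! Centroid -/
inductive Centroid : GType → Role → Prop where
  | gend : Centroid .gend s
  | gvar : Centroid (.gvar t) s
  | mu : Centroid G s → Centroid (.mu t G) s
  | comm : (s = p ∨ s = q) → (∀ b ∈ bs, Centroid b.2 s) →
      Centroid (.comm p q bs) s
  | route : (∀ b ∈ bs, Centroid b.2 s) → Centroid (.route p q s bs) s
  | trans : (s = p ∨ s = q) → (∀ b ∈ bs, Centroid b.2 s) →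
      Centroid (.trans p q j bs) s
  | transRoute : (∀ b ∈ bs, Centroid b.2 s) → Centroid (.transRoute p q s j bs) s

/-! LTS labels (actions) -/
inductive Act : Type where
  | send (p q : Role) (j : Lbl) : Act            -- pq!j
  | recv (p q : Role) (j : Lbl) : Act            -- pq?j
  | vsend (s p q : Role) (j : Lbl) : Act         -- via s (pq!j)
  | vrecv (s p q : Role) (j : Lbl) : Act         -- via s (pq?j)
deriving DecidableEq

def Act.subj : Act → Role
  | .send p _ _ => p
  | .recv _ q _ => q
  | .vsend _ p _ _ => p
  | .vrecv _ _ q _ => q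

def Act.isVia : Act → Prop
  | .vsend .. => True
  | .vrecv .. => True
  | _ => False

/-! LTS over global types -/
mutual
/-- `GStep G l G'` : the global type LTS (rules Gr1–Gr9). -/
inductive GStep : GType → Act → GType → Prop where
  | gr1 : (j, Gj) ∈ bs →
      GStep (.comm p q bs) (.send p q j) (.trans p q j bs)
  | gr2 : (j, Gj) ∈ bs →
      GStep (.trans p q j bs) (.recv p q j) Gj
  | gr3 : GStep (substG t (.mu t G) G) l G' → GStep (.mu t G) l G'
  | gr4 : l.subj ≠ p → l.subj ≠ q → GStepBs bs l bs' →
      GStep (.comm p q bs) l (.comm p q bs')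
  | gr5 : l.subj ≠ q → GStepOne bs j l bs' →
      GStep (.trans p q j bs) l (.trans p q j bs')
  | gr6 : (j, Gj) ∈ bs →
      GStep (.route p q s bs) (.vsend s p q j) (.transRoute p q s j bs)
  | gr7 : (j, Gj) ∈ bs →
      GStep (.transRoute p q s j bs) (.vrecv s p q j) Gj
  | gr8 : l.subj ≠ p → l.subj ≠ q → GStepBs bs l bs' →
      GStep (.route p q s bs) l (.route p q s bs')
  | gr9 : l.subj ≠ q → GStepOne bs j l bs' →
      GStep (.transRoute p q s j bs) l (.transRoute p q s j bs')

/-- All branches step with label `l` (labels unchanged). -/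
inductive GStepBs : List (Lbl × GType) → Act → List (Lbl × GType) → Prop where
  | nil : GStepBs [] l []
  | cons : GStep G l G' → GStepBs bs l bs' →
      GStepBs ((i, G) :: bs) l ((i, G') :: bs')

/-- The branch labelled `j` steps with `l`; all other branches are unchanged. -/
inductive GStepOne : List (Lbl × GType) → Lbl → Act → List (Lbl × GType) → Prop where
  | here : GStep G l G' → GStepOne ((j, G) :: bs) j l ((j, G') :: bs)
  | there : i ≠ j → GStepOne bs j l bs' →
      GStepOne ((i, G) :: bs) j l ((i, G) :: bs')
end
/-! Merge operator on local types (partial, as a relation) -/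

/-- Look up the continuation of label `l` in a branch list. -/
def lookupB (bs : List (Lbl × LType)) (l : Lbl) : Option LType :=
  (bs.find? (fun b => b.1 = l)).map Prod.snd

/-- `Merge T₁ T₂ T` : the merge `T₁ ⊓ T₂` is defined and equals `T`.
Two identical types merge to themselves; two branchings (resp. routed
branchings) from the same role merge by uniting their branch sets, merging
the continuations of common labels. -/
inductive Merge : LType → LType → LType → Prop where
  | refl (T : LType) : Merge T T T
  | bra {q : Role} {bs₁ bs₂ bs₃ : List (Lbl × LType)}
      (only₁ : ∀ l T₁, lookupB bs₁ l = some T₁ → lookupB bs₂ l = none →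
        lookupB bs₃ l = some T₁)
      (only₂ : ∀ l T₂, lookupB bs₁ l = none → lookupB bs₂ l = some T₂ →
        lookupB bs₃ l = some T₂)
      (common : ∀ l T₁ T₂ T₃, lookupB bs₁ l = some T₁ → lookupB bs₂ l = some T₂ →
        lookupB bs₃ l = some T₃ → Merge T₁ T₂ T₃)
      (common_def : ∀ l, (lookupB bs₁ l).isSome → (lookupB bs₂ l).isSome →
        (lookupB bs₃ l).isSome)
      (cover : ∀ l, (lookupB bs₃ l).isSome →
        (lookupB bs₁ l).isSome ∨ (lookupB bs₂ l).isSome) :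
      Merge (.bra q bs₁) (.bra q bs₂) (.bra q bs₃)
  | braVia {p s : Role} {bs₁ bs₂ bs₃ : List (Lbl × LType)}
      (only₁ : ∀ l T₁, lookupB bs₁ l = some T₁ → lookupB bs₂ l = none →
        lookupB bs₃ l = some T₁)
      (only₂ : ∀ l T₂, lookupB bs₁ l = none → lookupB bs₂ l = some T₂ →
        lookupB bs₃ l = some T₂)
      (common : ∀ l T₁ T₂ T₃, lookupB bs₁ l = some T₁ → lookupB bs₂ l = some T₂ →
        lookupB bs₃ l = some T₃ → Merge T₁ T₂ T₃)
      (common_def : ∀ l, (lookupB bs₁ l).isSome → (lookupB bs₂ l).isSome →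
        (lookupB bs₃ l).isSome)
      (cover : ∀ l, (lookupB bs₃ l).isSome →
        (lookupB bs₁ l).isSome ∨ (lookupB bs₂ l).isSome) :
      Merge (.braVia p s bs₁) (.braVia p s bs₂) (.braVia p s bs₃)

/-- Iterated merge `⊓_{i∈I} T_i` of a nonempty list of local types. -/
inductive MergeList : List LType → LType → Prop where
  | single : MergeList [T] T
  | cons : MergeList Ts T' → Merge T T' T'' → MergeList (T :: Ts) T''

/-! Endpoint projection (partial, as a relation) -/
mutual
/-- `Proj G r T` : the projection `G ↾ r` is defined and equals `T`. -/
inductive Proj : GType → Role → LType → Prop where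
  | gend : Proj .gend r .lend
  | gvar : Proj (.gvar t) r (.lvar t)
  | mu_end : Proj G r (.lvar u) → Proj (.mu t G) r .lend
  | mu : Proj G r T → (∀ u, T ≠ .lvar u) → Proj (.mu t G) r (.mu t T)
  | comm_sel : p ≠ q → ProjBs bs p bs' →
      Proj (.comm p q bs) p (.sel q bs')
  | comm_bra : p ≠ q → ProjBs bs q bs' →
      Proj (.comm p q bs) q (.bra p bs')
  | comm_merge : r ≠ p → r ≠ q → ProjBs bs r bs' →
      MergeList (bs'.map Prod.snd) T → Proj (.comm p q bs) r T
  | route_sel : p ≠ q → p ≠ s → q ≠ s → ProjBs bs p bs' →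
      Proj (.route p q s bs) p (.selVia q s bs')
  | route_bra : p ≠ q → p ≠ s → q ≠ s → ProjBs bs q bs' →
      Proj (.route p q s bs) q (.braVia p s bs')
  | route_router : p ≠ q → p ≠ s → q ≠ s → ProjBs bs s bs' →
      Proj (.route p q s bs) s (.router p q bs')
  | route_merge : r ≠ p → r ≠ q → r ≠ s → ProjBs bs r bs' →
      MergeList (bs'.map Prod.snd) T → Proj (.route p q s bs) r T
  | trans_bra : p ≠ q → ProjBs bs q bs' →
      Proj (.trans p q j bs) q (.bra p bs')
  | trans_other : r ≠ q → (j, Gj) ∈ bs → Proj Gj r T →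
      Proj (.trans p q j bs) r T
  | transRoute_bra : p ≠ q → p ≠ s → q ≠ s → ProjBs bs q bs' →
      Proj (.transRoute p q s j bs) q (.braVia p s bs')
  | transRoute_router : p ≠ q → p ≠ s → q ≠ s → ProjBs bs s bs' →
      Proj (.transRoute p q s j bs) s (.routerTrans p q j bs')
  | transRoute_other : r ≠ q → r ≠ s → (j, Gj) ∈ bs → Proj Gj r T →
      Proj (.transRoute p q s j bs) r T

/-- Pointwise projection of a branch list (labels preserved). -/
inductive ProjBs : List (Lbl × GType) → Role → List (Lbl × LType) → Prop where
  | nil : ProjBs [] r []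
  | cons : Proj G r T → ProjBs bs r bs' →
      ProjBs ((l, G) :: bs) r ((l, T) :: bs')
end

/-- `WF G` : the projection `G ↾ p` exists for every participant `p ∈ pt(G)`. -/
def WF (G : GType) : Prop := ∀ p, IsPt p G → ∃ T, Proj G p T

/-- `WFs G s` : `G` is well-formed with respect to the router `s`. -/
def WFs (G : GType) (s : Role) : Prop := WF G ∧ Centroid G s
/-! LTS over local types -/
mutual
/-- `LStep T l T'` : the local type LTS (rules Lr1–Lr11). -/
inductive LStep : LType → Act → LType → Prop where
  | lr1 : (j, Tj) ∈ bs → LStep (.sel q bs) (.send p q j) Tj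
  | lr2 : (j, Tj) ∈ bs → LStep (.bra q bs) (.recv q p j) Tj
  | lr3 : LStep (substL t (.mu t T) T) l T' → LStep (.mu t T) l T'
  | lr4 : (j, Tj) ∈ bs → LStep (.selVia q s bs) (.vsend s p q j) Tj
  | lr5 : (j, Tj) ∈ bs → LStep (.braVia q s bs) (.vrecv s q p j) Tj
  | lr6 : (j, Tj) ∈ bs →
      LStep (.router p q bs) (.vsend s p q j) (.routerTrans p q j bs)
  | lr7 : (j, Tj) ∈ bs → LStep (.routerTrans p q j bs) (.vrecv s p q j) Tj
  | lr8 : l.subj ≠ p → l.subj ≠ q → LStepBs bs l bs' →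
      LStep (.router p q bs) l (.router p q bs')
  | lr9 : l.subj ≠ q → LStepOne bs j l bs' →
      LStep (.routerTrans p q j bs) l (.routerTrans p q j bs')
  | lr10 : l.isVia → l.subj ≠ q → LStepBs bs l bs' →
      LStep (.sel q bs) l (.sel q bs')
  | lr11 : l.isVia → l.subj ≠ q → LStepBs bs l bs' →
      LStep (.bra q bs) l (.bra q bs')

/-- All branches step with label `l` (labels unchanged). -/
inductive LStepBs : List (Lbl × LType) → Act → List (Lbl × LType) → Prop where
  | nil : LStepBs [] l []
  | cons : LStep T l T' → LStepBs bs l bs' →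
      LStepBs ((i, T) :: bs) l ((i, T') :: bs')

/-- The branch labelled `j` steps with `l`; all other branches are unchanged. -/
inductive LStepOne : List (Lbl × LType) → Lbl → Act → List (Lbl × LType) → Prop where
  | here : LStep T l T' → LStepOne ((j, T) :: bs) j l ((j, T') :: bs)
  | there : i ≠ j → LStepOne bs j l bs' →
      LStepOne ((i, T) :: bs) j l ((i, T) :: bs')
end

/-! Configurations -/

/-- Unbounded FIFO buffers between each ordered pair of participants. -/
abbrev Bufs := Role → Role → List Lbl

/-- A configuration: a family of local types and FIFO buffers. -/
structure Config : Type where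
  types : Role → LType
  bufs : Bufs

/-- Append `j` to the buffer from `p` to `q`. -/
def pushBuf (w : Bufs) (p q : Role) (j : Lbl) : Bufs :=
  fun a b => if a = p ∧ b = q then w a b ++ [j] else w a b

/-- Replace the buffer from `p` to `q` by `wpq`. -/
def setBuf (w : Bufs) (p q : Role) (wpq : List Lbl) : Bufs :=
  fun a b => if a = p ∧ b = q then wpq else w a b

/-- The LTS over configurations. -/
inductive CStep : Config → Act → Config → Prop where
  | send {c : Config} {p q : Role} {j : Lbl} {T' : LType} :
      LStep (c.types p) (.send p q j) T' →
      CStep c (.send p q j)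
        ⟨Function.update c.types p T', pushBuf c.bufs p q j⟩
  | recv {c : Config} {p q : Role} {j : Lbl} {T' : LType} {w : List Lbl} :
      LStep (c.types q) (.recv p q j) T' →
      c.bufs p q = j :: w →
      CStep c (.recv p q j)
        ⟨Function.update c.types q T', setBuf c.bufs p q w⟩
  | vsend {c : Config} {s p q : Role} {j : Lbl} {Tp' Ts' : LType} :
      LStep (c.types p) (.vsend s p q j) Tp' →
      LStep (c.types s) (.vsend s p q j) Ts' →
      CStep c (.vsend s p q j)
        ⟨Function.update (Function.update c.types p Tp') s Ts',
         pushBuf c.bufs p q j⟩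
  | vrecv {c : Config} {s p q : Role} {j : Lbl} {Tq' Ts' : LType} {w : List Lbl} :
      LStep (c.types q) (.vrecv s p q j) Tq' →
      LStep (c.types s) (.vrecv s p q j) Ts' →
      c.bufs p q = j :: w →
      CStep c (.vrecv s p q j)
        ⟨Function.update (Function.update c.types q Tq') s Ts',
         setBuf c.bufs p q w⟩

/-! Traces -/

/-- Finite traces of the global type LTS. -/
inductive GTrace : GType → List Act → Prop where
  | nil : GTrace G []
  | cons : GStep G l G' → GTrace G' tr → GTrace G (l :: tr)

/-- Finite traces of the configuration LTS. -/
inductive CTrace : Config → List Act → Prop where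
  | nil : CTrace c []
  | cons : CStep c l c' → CTrace c' tr → CTrace c (l :: tr)
/-! Canonical (router-free) global types -/

/-- Canonical global types of the original MPST theory: no routed
communication and no in-transit constructs. -/
inductive Canonical : GType → Prop where
  | gend : Canonical .gend
  | gvar : Canonical (.gvar t)
  | mu : Canonical G → Canonical (.mu t G)
  | comm : (∀ b ∈ bs, Canonical b.2) → Canonical (.comm p q bs)

/-- Canonical global types, possibly with (direct) in-transit constructs:
no routed communication and no routed in-transit constructs. -/
inductive CanonicalT : GType → Prop where
  | gend : CanonicalT .gend
  | gvar : CanonicalT (.gvar t)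
  | mu : CanonicalT G → CanonicalT (.mu t G)
  | comm : (∀ b ∈ bs, CanonicalT b.2) → CanonicalT (.comm p q bs)
  | trans : (∀ b ∈ bs, CanonicalT b.2) → CanonicalT (.trans p q j bs)

/-! The router-parameterised encoding -/
mutual
/-- `encG s G` : the encoding `⟨G⟩_s` of a global type with respect to the
router role `s`. -/
def encG (s : Role) : GType → GType
  | .gend => .gend
  | .gvar t => .gvar t
  | .mu t G => .mu t (encG s G)
  | .comm p q bs =>
      if s = p ∨ s = q then .comm p q (encGBs s bs)
      else .route p q s (encGBs s bs)
  | .trans p q j bs =>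
      if s = p ∨ s = q then .trans p q j (encGBs s bs)
      else .transRoute p q s j (encGBs s bs)
  | .route p q r bs => .route p q r (encGBs s bs)
  | .transRoute p q r j bs => .transRoute p q r j (encGBs s bs)

def encGBs (s : Role) : List (Lbl × GType) → List (Lbl × GType)
  | [] => []
  | (l, G) :: bs => (l, encG s G) :: encGBs s bs
end

mutual
/-- `encL q s T` : the encoding `⟨T⟩_q^s` of a local type `T` at role `q`
with respect to the router role `s`. -/
def encL (q s : Role) : LType → LType
  | .lend => .lend
  | .lvar t => .lvar t
  | .mu t T => .mu t (encL q s T)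
  | .sel p bs =>
      if s = p ∨ s = q then .sel p (encLBs q s bs)
      else .selVia p s (encLBs q s bs)
  | .bra p bs =>
      if s = p ∨ s = q then .bra p (encLBs q s bs)
      else .braVia p s (encLBs q s bs)
  | .selVia p r bs => .selVia p r (encLBs q s bs)
  | .braVia p r bs => .braVia p r (encLBs q s bs)
  | .router p r bs => .router p r (encLBs q s bs)
  | .routerTrans p r j bs => .routerTrans p r j (encLBs q s bs)

def encLBs (q s : Role) : List (Lbl × LType) → List (Lbl × LType)
  | [] => []
  | (l, T) :: bs => (l, encL q s T) :: encLBs q s bs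
end

/-- `encA s l` : the encoding `⟨l⟩_s` of an LTS label with respect to the
router role `s`. -/
def encA (s : Role) : Act → Act
  | .send p q j => if s = p ∨ s = q then .send p q j else .vsend s p q j
  | .recv p q j => if s = p ∨ s = q then .recv p q j else .vrecv s p q j
  | .vsend r p q j => .vsend r p q j
  | .vrecv r p q j => .vrecv r p q j

/-! Subtyping and projected configurations -/

/-- Local subtyping: reflexive, and a branching may offer further branches
than its supertype. -/
inductive LSub : LType → LType → Prop where
  | refl (T : LType) : LSub T T
  | bra {q : Role} {bs bs' : List (Lbl × LType)}
      (hsub : ∀ l T T', lookupB bs l = some T → lookupB bs' l = some T' →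
        LSub T T')
      (hcover : ∀ l, (lookupB bs' l).isSome → (lookupB bs l).isSome) :
      LSub (.bra q bs) (.bra q bs')
  | braVia {p s : Role} {bs bs' : List (Lbl × LType)}
      (hsub : ∀ l T T', lookupB bs l = some T → lookupB bs' l = some T' →
        LSub T T')
      (hcover : ∀ l, (lookupB bs' l).isSome → (lookupB bs l).isSome) :
      LSub (.braVia p s bs) (.braVia p s bs')

/-- Configuration subtyping: buffers coincide and local types are pointwise
subtypes. -/
def CSub (c c' : Config) : Prop :=
  c.bufs = c'.bufs ∧ ∀ p, LSub (c.types p) (c'.types p)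

/-- `BufProj G w w'` : starting from buffers `w`, the in-transit constructs
of `G` determine the buffer contents `w'` of its projected configuration. -/
inductive BufProj : GType → Bufs → Bufs → Prop where
  | gend : BufProj .gend w w
  | gvar : BufProj (.gvar t) w w
  | mu : BufProj G w w' → BufProj (.mu t G) w w'
  | comm : bs ≠ [] → (∀ b ∈ bs, BufProj b.2 w w') →
      BufProj (.comm p q bs) w w'
  | route : bs ≠ [] → (∀ b ∈ bs, BufProj b.2 w w') →
      BufProj (.route p q s bs) w w'
  | trans : (j, Gj) ∈ bs → BufProj Gj (pushBuf w p q j) w' →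
      BufProj (.trans p q j bs) w w'
  | transRoute : (j, Gj) ∈ bs → BufProj Gj (pushBuf w p q j) w' →
      BufProj (.transRoute p q s j bs) w w'

/-- The empty buffers. -/
def emptyBufs : Bufs := fun _ _ => []

/-- `ProjConf G c` : `c` is the projected configuration `⟦G⟧` of `G`:
its local types are the projections of `G` onto each participant (and `end`
for non-participants), and its buffer contents are determined by the
in-transit constructs of `G`. -/
def ProjConf (G : GType) (c : Config) : Prop :=
  (∀ p, IsPt p G → Proj G p (c.types p)) ∧
  (∀ p, ¬ IsPt p G → c.types p = .lend) ∧
  BufProj G emptyBufs c.bufs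

/-- `InitConf G c` : `c` is the initial configuration of `G`: the local types
are the projections of `G` onto each participant (`end` for non-participants)
and all buffers are empty. -/
def InitConf (G : GType) (c : Config) : Prop :=
  (∀ p, IsPt p G → Proj G p (c.types p)) ∧
  (∀ p, ¬ IsPt p G → c.types p = .lend) ∧
  c.bufs = emptyBufs

/-! The encoding only turns a direct communication `p → q` with `s ∉ {p, q}` into the routed
communication `p → q via s` (and the in-transit `p ⇝ q` into `p ⇝ q via s`), and the
projection rules for routed communication onto `p`, `q` and third parties mirror those for
direct communication. Since `r ≠ s`, the role `r` is never the router of an encoded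
communication, so each projection rule for `G` is matched by the corresponding rule for
`⟨G⟩_s`. The only non-syntactic step is the merge, which the local encoding preserves because
it commutes with label lookup in branch lists. -/

lemma lookupB_map (f : LType → LType) (bs : List (Lbl × LType)) (l : Lbl) :
    lookupB (bs.map (Prod.map id f)) l = (lookupB bs l).map f := by
  simp only [lookupB, List.find?_map, Option.map_map]
  rfl

lemma encLBs_eq_map (q s : Role) (bs : List (Lbl × LType)) :
    encLBs q s bs = bs.map (Prod.map id (encL q s)) := by
  induction bs with
  | nil => rfl
  | cons b bs ih => obtain ⟨l, T⟩ := b; simp [encLBs, ih]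

lemma encGBs_eq_map (s : Role) (bs : List (Lbl × GType)) :
    encGBs s bs = bs.map (Prod.map id (encG s)) := by
  induction bs with
  | nil => rfl
  | cons b bs ih => obtain ⟨l, G⟩ := b; simp [encGBs, ih]

lemma lookupB_encLBs (q s : Role) (bs : List (Lbl × LType)) (l : Lbl) :
    lookupB (encLBs q s bs) l = (lookupB bs l).map (encL q s) := by
  rw [encLBs_eq_map, lookupB_map]

lemma eq_lvar_of_encL_eq_lvar {q s : Role} {T : LType} {u : TVar}
    (h : encL q s T = .lvar u) : T = .lvar u := by
  cases T <;> simp only [encL] at h <;> (try split at h) <;> simp_all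

theorem Merge.encL (q s : Role) {T₁ T₂ T₃ : LType} (h : Merge T₁ T₂ T₃) :
    Merge (encL q s T₁) (encL q s T₂) (encL q s T₃) := by
  induction h with
  | refl T => exact .refl _
  | @bra _ bs₁ bs₂ bs₃ only₁ only₂ _ common_def cover ih
  | @braVia _ _ bs₁ bs₂ bs₃ only₁ only₂ _ common_def cover ih =>
    let enc := encLBs q s
    have only₁' : ∀ l T, lookupB (enc bs₁) l = some T → lookupB (enc bs₂) l = none →
        lookupB (enc bs₃) l = some T := by
      simp only [enc, lookupB_encLBs, Option.map_eq_some_iff, Option.map_eq_none_iff]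
      rintro l _ ⟨T, h₁, rfl⟩ h₂
      exact ⟨T, only₁ l T h₁ h₂, rfl⟩
    have only₂' : ∀ l T, lookupB (enc bs₁) l = none → lookupB (enc bs₂) l = some T →
        lookupB (enc bs₃) l = some T := by
      simp only [enc, lookupB_encLBs, Option.map_eq_some_iff, Option.map_eq_none_iff]
      rintro l _ h₁ ⟨T, h₂, rfl⟩
      exact ⟨T, only₂ l T h₁ h₂, rfl⟩
    have common' : ∀ l T₁ T₂ T₃, lookupB (enc bs₁) l = some T₁ →
        lookupB (enc bs₂) l = some T₂ → lookupB (enc bs₃) l = some T₃ → Merge T₁ T₂ T₃ := by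
      simp only [enc, lookupB_encLBs, Option.map_eq_some_iff]
      rintro l _ _ _ ⟨T₁, h₁, rfl⟩ ⟨T₂, h₂, rfl⟩ ⟨T₃, h₃, rfl⟩
      exact ih l T₁ T₂ T₃ h₁ h₂ h₃
    have common_def' : ∀ l, (lookupB (enc bs₁) l).isSome → (lookupB (enc bs₂) l).isSome →
        (lookupB (enc bs₃) l).isSome := by
      simpa only [enc, lookupB_encLBs, Option.isSome_map] using common_def
    have cover' : ∀ l, (lookupB (enc bs₃) l).isSome →
        (lookupB (enc bs₁) l).isSome ∨ (lookupB (enc bs₂) l).isSome := by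
      simpa only [enc, lookupB_encLBs, Option.isSome_map] using cover
    simp only [_root_.encL]
    (try split_ifs) <;>
      first
        | exact .bra only₁' only₂' common' common_def' cover'
        | exact .braVia only₁' only₂' common' common_def' cover'

theorem MergeList.encL (q s : Role) {Ts : List LType} {T : LType} (h : MergeList Ts T) :
    MergeList (Ts.map (encL q s)) (encL q s T) := by
  induction h with
  | single => exact .single
  | cons _ hm ih => exact .cons ih (hm.encL q s)

lemma encLBs_map_snd (q s : Role) (bs : List (Lbl × LType)) :
    (encLBs q s bs).map Prod.snd = (bs.map Prod.snd).map (encL q s) := by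
  simp [encLBs_eq_map]

lemma mem_encGBs {s : Role} {bs : List (Lbl × GType)} {j : Lbl} {G : GType} (h : (j, G) ∈ bs) :
    (j, encG s G) ∈ encGBs s bs := by
  rw [encGBs_eq_map]
  exact List.mem_map_of_mem (f := Prod.map id (encG s)) h

mutual
theorem Proj.enc {G : GType} {r s : Role} {T : LType} (hrs : r ≠ s) :
    Proj G r T → Proj (encG s G) r (encL r s T)
  | .gend => .gend
  | .gvar => .gvar
  | .mu_end h => .mu_end (h.enc hrs)
  | .mu h hT => .mu (h.enc hrs) fun u hu => hT u (eq_lvar_of_encL_eq_lvar hu)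
  | .comm_sel (q := q) hpq hbs => by
    by_cases hq : s = q
    · subst hq
      simp only [encG, encL, or_true, if_true]
      exact .comm_sel hpq (hbs.enc hrs)
    · simp only [encG, encL, hq, hrs.symm, or_false, if_false]
      exact .route_sel hpq hrs (Ne.symm hq) (hbs.enc hrs)
  | .comm_bra (p := p) hpq hbs => by
    by_cases hp : s = p
    · subst hp
      simp only [encG, encL, true_or, if_true]
      exact .comm_bra hpq (hbs.enc hrs)
    · simp only [encG, encL, hp, hrs.symm, or_false, if_false]
      exact .route_bra hpq (Ne.symm hp) hrs (hbs.enc hrs)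
  | .comm_merge hrp hrq hbs hml => by
    have hml' := encLBs_map_snd r s _ ▸ hml.encL r s
    unfold encG
    split
    · exact .comm_merge hrp hrq (hbs.enc hrs) hml'
    · exact .route_merge hrp hrq hrs (hbs.enc hrs) hml'
  | .route_sel hpq hps hqs hbs => .route_sel hpq hps hqs (hbs.enc hrs)
  | .route_bra hpq hps hqs hbs => .route_bra hpq hps hqs (hbs.enc hrs)
  | .route_router hpq hps hqs hbs => .route_router hpq hps hqs (hbs.enc hrs)
  | .route_merge hrp hrq hrs' hbs hml =>
    .route_merge hrp hrq hrs' (hbs.enc hrs) (encLBs_map_snd r s _ ▸ hml.encL r s)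
  | .trans_bra (p := p) hpq hbs => by
    by_cases hp : s = p
    · subst hp
      simp only [encG, encL, true_or, if_true]
      exact .trans_bra hpq (hbs.enc hrs)
    · simp only [encG, encL, hp, hrs.symm, or_false, if_false]
      exact .transRoute_bra hpq (Ne.symm hp) hrs (hbs.enc hrs)
  | .trans_other hrq hj h => by
    unfold encG
    split
    · exact .trans_other hrq (mem_encGBs hj) (h.enc hrs)
    · exact .transRoute_other hrq hrs (mem_encGBs hj) (h.enc hrs)
  | .transRoute_bra hpq hps hqs hbs => .transRoute_bra hpq hps hqs (hbs.enc hrs)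
  | .transRoute_router hpq hps hqs hbs => .transRoute_router hpq hps hqs (hbs.enc hrs)
  | .transRoute_other hrq hrs' hj h => .transRoute_other hrq hrs' (mem_encGBs hj) (h.enc hrs)

theorem ProjBs.enc {bs : List (Lbl × GType)} {r s : Role} {bs' : List (Lbl × LType)}
    (hrs : r ≠ s) : ProjBs bs r bs' → ProjBs (encGBs s bs) r (encLBs r s bs')
  | .nil => .nil
  | .cons h hbs => .cons (h.enc hrs) (hbs.enc hrs)
end

/-- **Correspondence between the encodings**: for a canonical global type
`G` and roles `r ≠ s`, if the projection `G ↾ r` exists then the projection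
of the encoded global type equals the encoded local type of the projection:
`(⟨G⟩_s) ↾ r = ⟨G ↾ r⟩_r^s`. -/
theorem encoding_correspondence (r s : Role) (G : GType) (hG : Canonical G)
    (hrs : r ≠ s) (T : LType) (hproj : Proj G r T) :
    Proj (encG s G) r (encL r s T) :=
  hproj.enc hrs
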